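/- Let T and S be unbounded operators on a Hilbert space H with common dense domain V, T V ⊆ V, and ⟨Tα, β⟩ = ⟨α, Sβ⟩ for all α, β ∈ V. Let W be the completion of V under the graph norm ‖α‖_W² = ‖α‖² + ‖Tα‖², defining the minimal closure T_min of T with domain W, and let S_max be the maximal closed extension of S (with domain all α ∈ H such that φ ↦ ⟨α, Tφ⟩ is bounded on V). Then the Friedrichs extension Δ of the nonnegative symmetric operator ST equals the composition S_max ∘ T_min; in particular their domains coincide. -/

import Mathlib

/-!
Since `S` is a densely defined formal adjoint of `T`, the operator `T` is closable, and its closure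
`T_min` has the same adjoint `S_max = T†` as `T` (a graph and its closure have the same
orthogonal complement). The form defining the Friedrichs extension is `⟪T_min x, T_min φ⟫`, and the
identity `⟪T_min x, T_min φ⟫ = ⟪y, φ⟫` for all `φ ∈ Dom T_min` says exactly that `T_min x` lies in
the domain of `T_min† = S_max` with `S_max (T_min x) = y`.
-/

open scoped RealInnerProductSpace
open LinearPMap

section

variable {𝕜 E F : Type*} [RCLike 𝕜]
variable [NormedAddCommGroup E] [InnerProductSpace 𝕜 E]
variable [NormedAddCommGroup F] [InnerProductSpace 𝕜 F]

theorem Submodule.adjoint_topologicalClosure (g : Submodule 𝕜 (E × F)) :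
    g.topologicalClosure.adjoint = g.adjoint := by
  ext x
  simp only [Submodule.mem_adjoint_iff]
  refine ⟨fun h a b hab => h a b (g.le_topologicalClosure hab), fun h a b hab => ?_⟩
  have hclosed : IsClosed {p : E × F | inner 𝕜 p.2 x.1 - inner 𝕜 p.1 x.2 = 0} :=
    isClosed_eq (by fun_prop) continuous_const
  exact closure_minimal (fun p hp => h p.1 p.2 hp) hclosed hab

namespace LinearPMap

variable {T : E →ₗ.[𝕜] F} {S : F →ₗ.[𝕜] E}

theorem IsFormalAdjoint.isClosable [CompleteSpace F] (h : T.IsFormalAdjoint S)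
    (hS : Dense (S.domain : Set F)) : T.IsClosable :=
  (adjoint_isClosed hS).isClosable.leIsClosable (h.symm.le_adjoint hS)

theorem IsClosable.adjoint_closure [CompleteSpace E] (hT : T.IsClosable)
    (hdense : Dense (T.domain : Set E)) : T.closure† = T† := by
  have hdense' : Dense (T.closure.domain : Set E) := hdense.mono T.le_closure.1
  apply eq_of_eq_graph
  rw [adjoint_graph_eq_graph_adjoint hdense', ← hT.graph_closure_eq_closure_graph,
    Submodule.adjoint_topologicalClosure, adjoint_graph_eq_graph_adjoint hdense]

theorem exists_adjoint_apply_eq_iff [CompleteSpace E] (hT : Dense (T.domain : Set E))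
    (y : F) (x : E) :
    (∃ hy : y ∈ T†.domain, T† ⟨y, hy⟩ = x) ↔ ∀ v : T.domain, inner 𝕜 x (v : E) = inner 𝕜 y (T v) := by
  constructor
  · rintro ⟨hy, rfl⟩ v
    exact adjoint_isFormalAdjoint hT ⟨y, hy⟩ v
  · intro h
    have hy : y ∈ T†.domain := mem_adjoint_domain_of_exists y ⟨x, h⟩
    exact ⟨hy, adjoint_apply_eq hT ⟨y, hy⟩ h⟩

end LinearPMap

end

theorem friedrichs_extension_eq_smax_comp_tmin_general
    {H : Type*} [NormedAddCommGroup H] [InnerProductSpace ℝ H] [CompleteSpace H]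
    (V : Submodule ℝ H) (hdense : Dense (V : Set H))
    (T S : V →ₗ[ℝ] H)
    (hadj : ∀ α β : V, ⟪T α, (β : H)⟫ = ⟪(α : H), S β⟫)
    (Tp : H →ₗ.[ℝ] H) (hTp : Tp = ⟨V, T⟩) :
    ∀ x y : H,
      -- `x ∈ Dom Δ` and `Δ x = y` for the Friedrichs extension `Δ` of `S ∘ T` ...
      ((∃ hx : x ∈ Tp.closure.domain,
          ∀ φ : Tp.closure.domain,
            ⟪Tp.closure ⟨x, hx⟩, Tp.closure φ⟫ = ⟪y, (φ : H)⟫)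
        ↔ -- ... if and only if `x ∈ Dom (S_max ∘ T_min)` and `(S_max ∘ T_min) x = y`.
          (∃ hx : x ∈ Tp.closure.domain,
            ∃ h2 : Tp.closure ⟨x, hx⟩ ∈ (Tp†).domain,
              Tp† ⟨Tp.closure ⟨x, hx⟩, h2⟩ = y)) := by
  subst hTp
  have hclosable : (⟨V, T⟩ : H →ₗ.[ℝ] H).IsClosable :=
    IsFormalAdjoint.isClosable (S := ⟨V, S⟩) hadj hdense
  have hmin_dense : Dense ((⟨V, T⟩ : H →ₗ.[ℝ] H).closure.domain : Set H) :=
    hdense.mono (le_closure _).1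
  intro x y
  refine exists_congr fun hx => ?_
  rw [← hclosable.adjoint_closure hdense, exists_adjoint_apply_eq_iff hmin_dense]
  exact forall_congr' fun φ => eq_comm

theorem friedrichs_extension_eq_smax_comp_tmin
    {H : Type*} [NormedAddCommGroup H] [InnerProductSpace ℝ H] [CompleteSpace H]
    (V : Submodule ℝ H) (hdense : Dense (V : Set H))
    (T S : V →ₗ[ℝ] H)
    (hTV : ∀ v : V, T v ∈ V)
    (hadj : ∀ α β : V, ⟪T α, (β : H)⟫ = ⟪(α : H), S β⟫)
    (Tp : H →ₗ.[ℝ] H) (hTp : Tp = ⟨V, T⟩) :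
    ∀ x y : H,
      -- `x ∈ Dom Δ` and `Δ x = y` for the Friedrichs extension `Δ` of `S ∘ T` ...
      ((∃ hx : x ∈ Tp.closure.domain,
          ∀ φ : Tp.closure.domain,
            ⟪Tp.closure ⟨x, hx⟩, Tp.closure φ⟫ = ⟪y, (φ : H)⟫)
        ↔ -- ... if and only if `x ∈ Dom (S_max ∘ T_min)` and `(S_max ∘ T_min) x = y`.
          (∃ hx : x ∈ Tp.closure.domain,
            ∃ h2 : Tp.closure ⟨x, hx⟩ ∈ (Tp†).domain,
              Tp† ⟨Tp.closure ⟨x, hx⟩, h2⟩ = y)) :=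
  friedrichs_extension_eq_smax_comp_tmin_general V hdense T S hadj Tp hTp
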